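/- For smooth functions u on ℝ⁺×ℝ⁺ and any integer k ≥ 1, the pointwise inequality Σ_{l=0}^{k−1} |∂_ξ^l u_ξ| ≤ C(Σ_{|a|≤k−2} |Z^a u_{ξη}| + Σ_{l=0}^{k−1} |∂_t^l u_ξ|) holds, where Z^a=∂_ξ^{a₁}∂_η^{a₂} and the first sum on the right is empty when k=1. -/

import Mathlib

noncomputable def Dxi {E : Type*} [NormedAddCommGroup E] [NormedSpace ℝ E]
    (f : ℝ → ℝ → E) : ℝ → ℝ → E :=
  fun t x => deriv (fun s => f s x) t + deriv (fun y => f t y) x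

noncomputable def Deta {E : Type*} [NormedAddCommGroup E] [NormedSpace ℝ E]
    (f : ℝ → ℝ → E) : ℝ → ℝ → E :=
  fun t x => deriv (fun s => f s x) t - deriv (fun y => f t y) x

noncomputable def Dt {E : Type*} [NormedAddCommGroup E] [NormedSpace ℝ E]
    (f : ℝ → ℝ → E) : ℝ → ℝ → E :=
  fun t x => deriv (fun s => f s x) t

namespace Stmt14

lemma bool_count (L : List Bool) : L.count true + L.count false = L.length := by
  induction L with
  | nil => simp
  | cons b L ih => cases b <;> simp [List.count_cons] <;> omega

lemma bool_sort (L : List Bool) :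
    L.Perm (List.replicate (L.count true) true ++ List.replicate (L.count false) false) := by
  induction L with
  | nil => simp
  | cons b L ih =>
    cases b with
    | true =>
      simpa [List.count_cons, List.replicate_succ] using ih.cons true
    | false =>
      have h1 : (false :: L).Perm (false ::
          (List.replicate (L.count true) true ++ List.replicate (L.count false) false)) :=
        ih.cons false
      refine h1.trans ?_
      have h2 := (List.perm_middle (a := false)
        (l₁ := List.replicate (L.count true) true)
        (l₂ := List.replicate (L.count false) false)).symm
      refine h2.trans ?_
      simp [List.count_cons, List.replicate_succ]

variable {E : Type*} [NormedAddCommGroup E] [NormedSpace ℝ E]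

noncomputable def A (v : ℝ × ℝ) (F : ℝ × ℝ → E) : ℝ × ℝ → E :=
  fun p => fderiv ℝ F p v

noncomputable def AL (L : List (ℝ × ℝ)) (F : ℝ × ℝ → E) : ℝ × ℝ → E :=
  L.foldr A F

lemma AL_cons (v : ℝ × ℝ) (L : List (ℝ × ℝ)) (F : ℝ × ℝ → E) :
    AL (v :: L) F = A v (AL L F) := rfl
lemma AL_append (L₁ L₂ : List (ℝ × ℝ)) (F : ℝ × ℝ → E) :
    AL (L₁ ++ L₂) F = AL L₁ (AL L₂ F) := List.foldr_append

lemma A_smooth {F : ℝ × ℝ → E} (hF : ContDiff ℝ (⊤ : ℕ∞) F) (v : ℝ × ℝ) :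
    ContDiff ℝ (⊤ : ℕ∞) (A v F) := by
  have h1 : ContDiff ℝ (⊤ : ℕ∞) (fderiv ℝ F) := hF.fderiv_right (by simp)
  exact (ContinuousLinearMap.apply ℝ E v).contDiff.comp h1

lemma AL_smooth {F : ℝ × ℝ → E} (hF : ContDiff ℝ (⊤ : ℕ∞) F) (L : List (ℝ × ℝ)) :
    ContDiff ℝ (⊤ : ℕ∞) (AL L F) := by
  induction L with
  | nil => exact hF
  | cons v L ih => exact A_smooth ih v

lemma sndDeriv_repr {F : ℝ × ℝ → E} (hF : ContDiff ℝ (⊤ : ℕ∞) F) (v w p) :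
    A v (A w F) p = fderiv ℝ (fderiv ℝ F) p v w := by
  have hd : DifferentiableAt ℝ (fderiv ℝ F) p :=
    ((hF.fderiv_right (m := 1) (WithTop.coe_le_coe.2 le_top)).differentiable one_ne_zero).differentiableAt
  have hcomp : A w F = (ContinuousLinearMap.apply ℝ E w) ∘ (fderiv ℝ F) := rfl
  calc A v (A w F) p
      = fderiv ℝ ((ContinuousLinearMap.apply ℝ E w) ∘ (fderiv ℝ F)) p v := by rw [A, hcomp]
    _ = ((ContinuousLinearMap.apply ℝ E w).comp (fderiv ℝ (fderiv ℝ F) p)) v := by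
        rw [fderiv_comp p (ContinuousLinearMap.apply ℝ E w).differentiableAt hd,
          ContinuousLinearMap.fderiv]
    _ = fderiv ℝ (fderiv ℝ F) p v w := rfl

lemma A_comm {F : ℝ × ℝ → E} (hF : ContDiff ℝ (⊤ : ℕ∞) F) (v w : ℝ × ℝ) :
    A v (A w F) = A w (A v F) := by
  funext p
  rw [sndDeriv_repr hF, sndDeriv_repr hF]
  exact (hF.contDiffAt.isSymmSndFDerivAt (by rw [minSmoothness_of_isRCLikeNormedField]; exact WithTop.coe_le_coe.2 le_top)).eq v w

lemma AL_perm {F : ℝ × ℝ → E} (hF : ContDiff ℝ (⊤ : ℕ∞) F) {L L' : List (ℝ × ℝ)}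
    (h : L.Perm L') : AL L F = AL L' F := by
  induction h with
  | nil => rfl
  | cons x h ih => rw [AL_cons, AL_cons, ih]
  | swap x y l => rw [AL_cons, AL_cons, AL_cons, AL_cons, A_comm (AL_smooth hF l)]
  | trans h1 h2 ih1 ih2 => rw [ih1, ih2]

def xiv : ℝ × ℝ := (1, 1)
def etav : ℝ × ℝ := (1, -1)
def tauv : ℝ × ℝ := (1, 0)
def dir (b : Bool) : ℝ × ℝ := bif b then xiv else etav

lemma xiv_add_etav : xiv + etav = (2 : ℝ) • tauv := by
  simp [xiv, etav, tauv, Prod.ext_iff]; norm_num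

lemma expand {F : ℝ × ℝ → E} (hF : ContDiff ℝ (⊤ : ℕ∞) F) :
    ∀ (l : ℕ) (L : List (ℝ × ℝ)) (p : ℝ × ℝ),
    (2:ℝ)^l • AL (List.replicate l tauv ++ L) F p
      = ∑ g : Fin l → Bool, AL (List.ofFn (fun i => dir (g i)) ++ L) F p := by
  intro l
  induction l with
  | zero =>
    intro L p
    simp
  | succ l ih =>
    intro L p
    have hstep : ∀ v : ℝ × ℝ,
        AL (v :: (List.replicate l tauv ++ L)) F p
          = AL (List.replicate l tauv ++ (v :: L)) F p := by
      intro v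
      exact congrFun (AL_perm hF (List.perm_middle.symm)) p
    have hG := AL_smooth hF (List.replicate l tauv ++ L) (F := F)
    have key : (2:ℝ) • AL (tauv :: (List.replicate l tauv ++ L)) F p
        = AL (xiv :: (List.replicate l tauv ++ L)) F p
          + AL (etav :: (List.replicate l tauv ++ L)) F p := by
      simp only [AL_cons, A]
      rw [← (fderiv ℝ (AL (List.replicate l tauv ++ L) F) p).map_add, xiv_add_etav,
        (fderiv ℝ (AL (List.replicate l tauv ++ L) F) p).map_smul]
    calc (2:ℝ)^(l+1) • AL (List.replicate (l+1) tauv ++ L) F p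
        = (2:ℝ)^l • ((2:ℝ) • AL (tauv :: (List.replicate l tauv ++ L)) F p) := by
          rw [List.replicate_succ, smul_smul, ← pow_succ]
          rfl
      _ = (2:ℝ)^l • AL (List.replicate l tauv ++ (xiv :: L)) F p
          + (2:ℝ)^l • AL (List.replicate l tauv ++ (etav :: L)) F p := by
          rw [key, smul_add, hstep, hstep]
      _ = (∑ g : Fin l → Bool, AL (List.ofFn (fun i => dir (g i)) ++ (xiv :: L)) F p)
          + (∑ g : Fin l → Bool, AL (List.ofFn (fun i => dir (g i)) ++ (etav :: L)) F p) := by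
          rw [ih, ih]
      _ = ∑ g : Fin (l+1) → Bool, AL (List.ofFn (fun i => dir (g i)) ++ L) F p := by
          have hcompat : ∀ g : Fin (l+1) → Bool,
              AL (List.ofFn (fun i => dir (g i)) ++ L) F p
                = (fun q : Bool × (Fin l → Bool) =>
                    AL (dir q.1 :: (List.ofFn (fun i => dir (q.2 i)) ++ L)) F p)
                  ((Fin.consEquiv (fun _ : Fin (l+1) => Bool)).symm g) := by
            intro g
            have h0 : List.ofFn (fun i => dir (g i))
                = dir (g 0) :: List.ofFn (fun i : Fin l => dir (g i.succ)) :=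
              List.ofFn_succ
            rw [h0]
            rfl
          rw [Fintype.sum_equiv (Fin.consEquiv (fun _ : Fin (l+1) => Bool)).symm
              (fun g : Fin (l+1) → Bool => AL (List.ofFn (fun i => dir (g i)) ++ L) F p)
              (fun q : Bool × (Fin l → Bool) =>
                AL (dir q.1 :: (List.ofFn (fun i => dir (q.2 i)) ++ L)) F p) hcompat,
            Fintype.sum_prod_type, Fintype.sum_bool]
          have hmid : ∀ (v : ℝ × ℝ) (M : List (ℝ × ℝ)),
              AL (M ++ (v :: L)) F p = AL (v :: (M ++ L)) F p := by
            intro v M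
            exact congrFun (AL_perm hF List.perm_middle) p
          simp only [hmid, dir, cond_true, cond_false]

lemma deriv_fst {u : ℝ → ℝ → E} {t x : ℝ}
    (hd : DifferentiableAt ℝ (fun p : ℝ × ℝ => u p.1 p.2) (t, x)) :
    deriv (fun s => u s x) t = fderiv ℝ (fun p : ℝ × ℝ => u p.1 p.2) (t, x) (1, 0) := by
  have h : HasDerivAt (fun s : ℝ => ((s, x) : ℝ × ℝ)) (1, 0) t :=
    (hasDerivAt_id t).prodMk (hasDerivAt_const t x)
  exact (hd.hasFDerivAt.comp_hasDerivAt t h).deriv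

lemma deriv_snd {u : ℝ → ℝ → E} {t x : ℝ}
    (hd : DifferentiableAt ℝ (fun p : ℝ × ℝ => u p.1 p.2) (t, x)) :
    deriv (fun y => u t y) x = fderiv ℝ (fun p : ℝ × ℝ => u p.1 p.2) (t, x) (0, 1) := by
  have h : HasDerivAt (fun y : ℝ => ((t, y) : ℝ × ℝ)) (0, 1) x :=
    (hasDerivAt_const x t).prodMk (hasDerivAt_id x)
  exact (hd.hasFDerivAt.comp_hasDerivAt x h).deriv

lemma Dxi_bridge {u : ℝ → ℝ → E} {G : ℝ × ℝ → E}
    (h : (fun p : ℝ × ℝ => u p.1 p.2) = G) (hG : ContDiff ℝ (⊤ : ℕ∞) G) :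
    (fun p : ℝ × ℝ => Dxi u p.1 p.2) = A xiv G := by
  funext p
  obtain ⟨t, x⟩ := p
  have hd : DifferentiableAt ℝ (fun p : ℝ × ℝ => u p.1 p.2) (t, x) := by
    rw [h]; exact (hG.differentiable (by simp)).differentiableAt
  show Dxi u t x = A xiv G (t, x)
  have hx : xiv = ((1:ℝ), (0:ℝ)) + ((0:ℝ), (1:ℝ)) := by
    simp [xiv, Prod.ext_iff]
  rw [Dxi, deriv_fst hd, deriv_snd hd, h, A]
  rw [hx, map_add]

lemma Deta_bridge {u : ℝ → ℝ → E} {G : ℝ × ℝ → E}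
    (h : (fun p : ℝ × ℝ => u p.1 p.2) = G) (hG : ContDiff ℝ (⊤ : ℕ∞) G) :
    (fun p : ℝ × ℝ => Deta u p.1 p.2) = A etav G := by
  funext p
  obtain ⟨t, x⟩ := p
  have hd : DifferentiableAt ℝ (fun p : ℝ × ℝ => u p.1 p.2) (t, x) := by
    rw [h]; exact (hG.differentiable (by simp)).differentiableAt
  show Deta u t x = A etav G (t, x)
  have hx : etav = ((1:ℝ), (0:ℝ)) - ((0:ℝ), (1:ℝ)) := by
    simp [etav, Prod.ext_iff]
  rw [Deta, deriv_fst hd, deriv_snd hd, h, A]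
  rw [hx, map_sub]

lemma Dt_bridge {u : ℝ → ℝ → E} {G : ℝ × ℝ → E}
    (h : (fun p : ℝ × ℝ => u p.1 p.2) = G) (hG : ContDiff ℝ (⊤ : ℕ∞) G) :
    (fun p : ℝ × ℝ => Dt u p.1 p.2) = A tauv G := by
  funext p
  obtain ⟨t, x⟩ := p
  have hd : DifferentiableAt ℝ (fun p : ℝ × ℝ => u p.1 p.2) (t, x) := by
    rw [h]; exact (hG.differentiable (by simp)).differentiableAt
  show Dt u t x = A tauv G (t, x)
  rw [Dt, deriv_fst hd, h, A]
  rfl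

lemma iter_bridge (Op : (ℝ → ℝ → E) → ℝ → ℝ → E) (v : ℝ × ℝ)
    (hOp : ∀ (u : ℝ → ℝ → E) (G : ℝ × ℝ → E),
      (fun p : ℝ × ℝ => u p.1 p.2) = G → ContDiff ℝ (⊤ : ℕ∞) G →
      (fun p : ℝ × ℝ => Op u p.1 p.2) = A v G)
    {u : ℝ → ℝ → E} {G : ℝ × ℝ → E}
    (h : (fun p : ℝ × ℝ => u p.1 p.2) = G) (hG : ContDiff ℝ (⊤ : ℕ∞) G) :
    ∀ l : ℕ, (fun p : ℝ × ℝ => Op^[l] u p.1 p.2) = AL (List.replicate l v) G := by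
  intro l
  induction l with
  | zero => exact h
  | succ l ih =>
    have hstep := hOp (Op^[l] u) (AL (List.replicate l v) G) ih (AL_smooth hG _)
    rw [List.replicate_succ]
    show (fun p : ℝ × ℝ => Op^[l+1] u p.1 p.2) = A v (AL (List.replicate l v) G)
    simp only [Function.iterate_succ_apply']
    exact hstep

end Stmt14

open Stmt14 in
set_option maxHeartbeats 1000000 in
theorem stmt_14 (n : ℕ) (k : ℕ) (hk : 1 ≤ k) :
    ∃ C : ℝ, 0 < C ∧ ∀ u : ℝ → ℝ → EuclideanSpace ℝ (Fin n),
      ContDiff ℝ (⊤ : ℕ∞) (fun p : ℝ × ℝ => u p.1 p.2) →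
      ∀ t x : ℝ,
        ∑ l ∈ Finset.range k, ‖Dxi^[l] (Dxi u) t x‖
          ≤ C * ((∑ a ∈ (Finset.range k ×ˢ Finset.range k).filter
                    (fun a => a.1 + a.2 + 2 ≤ k),
                  ‖Dxi^[a.1] (Deta^[a.2] (Deta (Dxi u))) t x‖)
              + ∑ l ∈ Finset.range k, ‖Dt^[l] (Dxi u) t x‖) := by
  refine ⟨(k : ℝ) * 2 ^ k, by positivity, ?_⟩
  intro u hF t x
  set F : ℝ × ℝ → EuclideanSpace ℝ (Fin n) := fun p : ℝ × ℝ => u p.1 p.2 with hFdef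
  set p : ℝ × ℝ := (t, x) with hp
  -- bridges
  have h1 : (fun q : ℝ × ℝ => Dxi u q.1 q.2) = AL [xiv] F := Dxi_bridge rfl hF
  have hA1 : ContDiff ℝ (⊤ : ℕ∞) (AL [xiv] F) := AL_smooth hF _
  have h2 : (fun q : ℝ × ℝ => Deta (Dxi u) q.1 q.2) = AL [etav, xiv] F :=
    Deta_bridge h1 hA1
  have hA2 : ContDiff ℝ (⊤ : ℕ∞) (AL [etav, xiv] F) := AL_smooth hF _
  have haf : ∀ l : ℕ, Dxi^[l] (Dxi u) t x = AL (List.replicate l xiv ++ [xiv]) F p := by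
    intro l
    have := congrFun (iter_bridge Dxi xiv (fun u G h hG => Dxi_bridge h hG) h1 hA1 l) p
    rwa [AL_append]
  have hbf : ∀ l : ℕ, Dt^[l] (Dxi u) t x = AL (List.replicate l tauv ++ [xiv]) F p := by
    intro l
    have := congrFun (iter_bridge Dt tauv (fun u G h hG => Dt_bridge h hG) h1 hA1 l) p
    rwa [AL_append]
  have hcf : ∀ a b : ℕ, Dxi^[a] (Deta^[b] (Deta (Dxi u))) t x
      = AL (List.replicate a xiv ++ (List.replicate b etav ++ [etav, xiv])) F p := by
    intro a b
    have h3 : (fun q : ℝ × ℝ => Deta^[b] (Deta (Dxi u)) q.1 q.2)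
        = AL (List.replicate b etav ++ [etav, xiv]) F := by
      rw [AL_append]
      exact iter_bridge Deta etav (fun u G h hG => Deta_bridge h hG) h2 hA2 b
    have := congrFun (iter_bridge Dxi xiv (fun u G h hG => Dxi_bridge h hG) h3
      (AL_smooth hF _) a) p
    rwa [AL_append]
  set S1 : ℝ := ∑ a ∈ (Finset.range k ×ˢ Finset.range k).filter
      (fun a => a.1 + a.2 + 2 ≤ k),
    ‖Dxi^[a.1] (Deta^[a.2] (Deta (Dxi u))) t x‖ with hS1def
  set S2 : ℝ := ∑ l ∈ Finset.range k, ‖Dt^[l] (Dxi u) t x‖ with hS2def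
  have hS1 : 0 ≤ S1 := Finset.sum_nonneg fun _ _ => norm_nonneg _
  have hS2 : 0 ≤ S2 := Finset.sum_nonneg fun _ _ => norm_nonneg _
  -- per-l bound
  have main : ∀ l ∈ Finset.range k,
      ‖Dxi^[l] (Dxi u) t x‖ ≤ (2:ℝ)^k * (S1 + S2) := by
    intro l hl
    rw [Finset.mem_range] at hl
    have hexp := expand hF l [xiv] p
    have hsplit := (Finset.add_sum_erase Finset.univ
      (fun g : Fin l → Bool => AL (List.ofFn (fun i => dir (g i)) ++ [xiv]) F p)
      (Finset.mem_univ (fun _ => true))).symm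
    have htop : AL (List.ofFn (fun i : Fin l => dir ((fun _ => true) i)) ++ [xiv]) F p
        = AL (List.replicate l xiv ++ [xiv]) F p := by
      simp [dir]
    have hid : AL (List.replicate l xiv ++ [xiv]) F p
        = (2:ℝ)^l • AL (List.replicate l tauv ++ [xiv]) F p
          - ∑ g ∈ Finset.univ.erase (fun _ : Fin l => true),
              AL (List.ofFn (fun i => dir (g i)) ++ [xiv]) F p := by
      rw [hexp, hsplit, htop]; abel
    -- bound each erased term by S1
    have herase : ∀ g ∈ Finset.univ.erase (fun _ : Fin l => true),
        ‖AL (List.ofFn (fun i => dir (g i)) ++ [xiv]) F p‖ ≤ S1 := by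
      intro g hg
      have hgne : g ≠ fun _ => true := (Finset.mem_erase.1 hg).1
      have hex : ∃ i, g i = false := by
        by_contra hcon
        push_neg at hcon
        exact hgne (funext fun i => by
          have := hcon i; revert this; cases g i <;> simp)
      set a := (List.ofFn g).count true with ha
      set c := (List.ofFn g).count false with hc
      have hac : a + c = l := by
        have := bool_count (List.ofFn g)
        rwa [List.length_ofFn] at this
      have hc1 : 1 ≤ c := by
        obtain ⟨i, hi⟩ := hex
        have : false ∈ List.ofFn g := List.mem_ofFn.2 ⟨i, hi⟩
        exact List.count_pos_iff.2 this
      obtain ⟨b, hb⟩ : ∃ b, c = b + 1 := ⟨c - 1, by omega⟩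
      have hperm : (List.ofFn (fun i => dir (g i)) ++ [xiv]).Perm
          (List.replicate a xiv ++ (List.replicate b etav ++ [etav, xiv])) := by
        have e1 : List.ofFn (fun i => dir (g i)) = List.map dir (List.ofFn g) :=
          (List.map_ofFn (f := g) (g := dir)).symm
        have e2 : (List.map dir (List.ofFn g)).Perm
            (List.replicate a xiv ++ (List.replicate b etav ++ [etav])) := by
          have h5 := (bool_sort (List.ofFn g)).map dir
          rw [List.map_append, List.map_replicate, List.map_replicate] at h5
          simp only [dir, cond_true, cond_false] at h5 ⊢
          rw [← ha, ← hc] at h5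
          rw [hb, List.replicate_succ'] at h5
          exact h5
        have e3 : (List.ofFn (fun i => dir (g i)) ++ [xiv]).Perm
            ((List.replicate a xiv ++ (List.replicate b etav ++ [etav])) ++ [xiv]) := by
          rw [e1]; exact e2.append_right [xiv]
        have e4 : (List.replicate a xiv ++ (List.replicate b etav ++ [etav])) ++ [xiv]
            = List.replicate a xiv ++ (List.replicate b etav ++ [etav, xiv]) := by
          simp [List.append_assoc]
        rw [e4] at e3
        exact e3
      have hval : AL (List.ofFn (fun i => dir (g i)) ++ [xiv]) F p
          = Dxi^[a] (Deta^[b] (Deta (Dxi u))) t x := by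
        rw [congrFun (AL_perm hF hperm) p, hcf a b]
      rw [hval, hS1def]
      have hmem : ((a, b) : ℕ × ℕ) ∈ (Finset.range k ×ˢ Finset.range k).filter
          (fun q => q.1 + q.2 + 2 ≤ k) := by
        refine Finset.mem_filter.2 ⟨Finset.mem_product.2 ⟨?_, ?_⟩, ?_⟩
        · exact Finset.mem_range.2 (by omega)
        · exact Finset.mem_range.2 (by omega)
        · simp only []
          omega
      set f : ℕ × ℕ → ℝ := fun q => ‖Dxi^[q.1] (Deta^[q.2] (Deta (Dxi u))) t x‖ with hf
      have h := Finset.single_le_sum (f := f) (fun i _ => norm_nonneg _) hmem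
      have hfa : f (a, b) = ‖Dxi^[a] (Deta^[b] (Deta (Dxi u))) t x‖ := rfl
      rw [hfa] at h
      exact h
    have hDt : ‖AL (List.replicate l tauv ++ [xiv]) F p‖ ≤ S2 := by
      rw [← hbf l]
      exact Finset.single_le_sum (f := fun l => ‖Dt^[l] (Dxi u) t x‖)
        (fun _ _ => norm_nonneg _) (Finset.mem_range.2 hl)
    have hcard : ((Finset.univ.erase (fun _ : Fin l => true)).card : ℝ) ≤ (2:ℝ)^l := by
      have h1 : (Finset.univ.erase (fun _ : Fin l => true)).card ≤ 2^l := by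
        calc (Finset.univ.erase (fun _ : Fin l => true)).card
            ≤ (Finset.univ : Finset (Fin l → Bool)).card := Finset.card_erase_le
          _ = 2^l := by simp [Fintype.card_fun]
      calc ((Finset.univ.erase (fun _ : Fin l => true)).card : ℝ)
          ≤ ((2^l : ℕ) : ℝ) := by exact_mod_cast h1
        _ = (2:ℝ)^l := by push_cast; ring
    have hsum_erase : ‖∑ g ∈ Finset.univ.erase (fun _ : Fin l => true),
        AL (List.ofFn (fun i => dir (g i)) ++ [xiv]) F p‖ ≤ (2:ℝ)^l * S1 := by
      calc ‖∑ g ∈ Finset.univ.erase (fun _ : Fin l => true),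
          AL (List.ofFn (fun i => dir (g i)) ++ [xiv]) F p‖
          ≤ ∑ g ∈ Finset.univ.erase (fun _ : Fin l => true),
            ‖AL (List.ofFn (fun i => dir (g i)) ++ [xiv]) F p‖ := norm_sum_le _ _
        _ ≤ (Finset.univ.erase (fun _ : Fin l => true)).card • S1 :=
            Finset.sum_le_card_nsmul _ _ _ herase
        _ = ((Finset.univ.erase (fun _ : Fin l => true)).card : ℝ) * S1 := by
            rw [nsmul_eq_mul]
        _ ≤ (2:ℝ)^l * S1 := by
            exact mul_le_mul_of_nonneg_right hcard hS1
    have h2l : (2:ℝ)^l ≤ (2:ℝ)^k := by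
      exact pow_le_pow_right₀ (by norm_num) (le_of_lt hl)
    calc ‖Dxi^[l] (Dxi u) t x‖
        = ‖AL (List.replicate l xiv ++ [xiv]) F p‖ := by rw [haf l]
      _ ≤ (2:ℝ)^l * ‖AL (List.replicate l tauv ++ [xiv]) F p‖
          + ‖∑ g ∈ Finset.univ.erase (fun _ : Fin l => true),
              AL (List.ofFn (fun i => dir (g i)) ++ [xiv]) F p‖ := by
          rw [hid]
          refine (norm_sub_le _ _).trans ?_
          gcongr
          rw [norm_smul]
          simp [abs_of_pos (pow_pos (by norm_num : (0:ℝ) < 2) l)]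
      _ ≤ (2:ℝ)^l * S2 + (2:ℝ)^l * S1 := by
          gcongr
      _ = (2:ℝ)^l * (S1 + S2) := by ring
      _ ≤ (2:ℝ)^k * (S1 + S2) := by
          exact mul_le_mul_of_nonneg_right h2l (by linarith)
  calc ∑ l ∈ Finset.range k, ‖Dxi^[l] (Dxi u) t x‖
      ≤ (Finset.range k).card • ((2:ℝ)^k * (S1 + S2)) :=
        Finset.sum_le_card_nsmul _ _ _ main
    _ = (k : ℝ) * 2^k * (S1 + S2) := by
        rw [nsmul_eq_mul, Finset.card_range]; ring
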